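/- arXiv:1003.5419 — 2 statements merged into one kernel-verified Lean document; each statement's English description precedes it below -/
import Mathlib

section
/- Let J ⊆ L∞ be a convex cone that is weak*-closed (L∞ being the dual of L¹(P)), satisfies J = J − L∞₊ and J ∩ L∞₊ = {0}, where L∞₊ is the cone of a.s. nonnegative elements of L∞. Then there exists a probability Q equivalent to P such that E_Q[φ] ≤ 0 for all φ ∈ J. -/
open MeasureTheory Filter Set

noncomputable section

variable {Ω : Type*} [MeasurableSpace Ω]

/-- The nonnegative orthant `L⁰₊` of `L⁰`: (a.e. classes of) random variables that are
a.e. nonnegative.  We work with representatives, requiring a.e.-measurability. -/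
def L0plus (P : Measure Ω) : Set (Ω → ℝ) :=
  {f | AEMeasurable f P ∧ 0 ≤ᵐ[P] f}

/-- A set `A ⊆ L⁰₊` is bounded (in probability) if `lim_{ℓ→∞} sup_{f∈A} P[f>ℓ] = 0`. -/
def BoundedInProb (P : Measure Ω) (A : Set (Ω → ℝ)) : Prop :=
  Tendsto (fun ℓ : ℝ => ⨆ f ∈ A, P {ω | ℓ < f ω}) atTop (nhds 0)

/-- A set `K` is closed in probability: it contains every (a.e.-measurable) limit in
measure of sequences from `K`.  (Convergence in probability is metrizable, so sequential
closedness is closedness.) -/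
def ClosedInProb (P : Measure Ω) (K : Set (Ω → ℝ)) : Prop :=
  ∀ (f : ℕ → Ω → ℝ) (g : Ω → ℝ), (∀ n, f n ∈ K) → AEMeasurable g P →
    TendstoInMeasure P f atTop g → g ∈ K

/-- `g` is strictly positive on `C`: `P[f > 0, g = 0] = 0` for every `f ∈ C`. -/
def StrictlyPositiveOn (P : Measure Ω) (C : Set (Ω → ℝ)) (g : Ω → ℝ) : Prop :=
  ∀ f ∈ C, P ({ω | 0 < f ω} ∩ {ω | g ω = 0}) = 0

/-- `Q` is a probability measure equivalent to `P`. -/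
def EquivProb (P Q : Measure Ω) : Prop :=
  IsProbabilityMeasure Q ∧ Q ≪ P ∧ P ≪ Q

/-- `g` is a numéraire of `C`: it is strictly positive on `C` and there is an equivalent
probability `Q` with `E_Q[(f/g)·1_{g>0}] ≤ Q[g>0]` for all `f ∈ C`. -/
def IsNumeraire (P : Measure Ω) (C : Set (Ω → ℝ)) (g : Ω → ℝ) : Prop :=
  StrictlyPositiveOn P C g ∧
    ∃ Q : Measure Ω, EquivProb P Q ∧
      ∀ f ∈ C, (∫⁻ ω in {ω | 0 < g ω}, ENNReal.ofReal (f ω / g ω) ∂Q) ≤ Q {ω | 0 < g ω}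

/-- The class `CS_g(C)` of subsets `K` of `L⁰₊` with (CS1) `C ⊆ K`, (CS2) `K` convex and
closed in probability, (CS3) `f ∈ K`, `δ ≥ 0`, `(1+δ)f − δg ∈ L⁰₊` imply `(1+δ)f − δg ∈ K`. -/
def CSclass (P : Measure Ω) (C : Set (Ω → ℝ)) (g : Ω → ℝ) : Set (Set (Ω → ℝ)) :=
  {K | K ⊆ L0plus P ∧ C ⊆ K ∧ Convex ℝ K ∧ ClosedInProb P K ∧
    ∀ f ∈ K, ∀ δ : ℝ, 0 ≤ δ →
      (fun ω => (1 + δ) * f ω - δ * g ω) ∈ L0plus P →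
      (fun ω => (1 + δ) * f ω - δ * g ω) ∈ K}

/-- `cs_g(C)`, the smallest element of `CS_g(C)`. -/
def csSet (P : Measure Ω) (C : Set (Ω → ℝ)) (g : Ω → ℝ) : Set (Ω → ℝ) :=
  ⋂ K ∈ CSclass P C g, K

/-- The solid hull of `K` in `L⁰₊`. -/
def SolidHull (P : Measure Ω) (K : Set (Ω → ℝ)) : Set (Ω → ℝ) :=
  {f | f ∈ L0plus P ∧ ∃ h ∈ K, f ≤ᵐ[P] h}

/-- `L∞`: essentially bounded (a.e.-measurable) random variables. -/
def Linf (P : Measure Ω) : Set (Ω → ℝ) :=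
  {f | AEMeasurable f P ∧ ∃ c : ℝ, ∀ᵐ ω ∂P, |f ω| ≤ c}

/-- `L∞₊ = L⁰₊ ∩ L∞`. -/
def LinfPlus (P : Measure Ω) : Set (Ω → ℝ) := L0plus P ∩ Linf P

/-- `L` is solid: `0 ≤ u ≤ h` a.s. with `h ∈ L` implies `u ∈ L`. -/
def IsSolid (P : Measure Ω) (L : Set (Ω → ℝ)) : Prop :=
  ∀ u : Ω → ℝ, AEMeasurable u P → 0 ≤ᵐ[P] u → (∃ h ∈ L, u ≤ᵐ[P] h) → u ∈ L

/-- `A_α := α (L − 1) = { α(f − 1) : f ∈ L }`. -/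
def Aset (L : Set (Ω → ℝ)) (α : ℝ) : Set (Ω → ℝ) :=
  (fun f : Ω → ℝ => fun ω => α * (f ω - 1)) '' L

/-- `J := ⋃_{α ≥ 0} A_α`. -/
def Jset (L : Set (Ω → ℝ)) : Set (Ω → ℝ) := ⋃ α ∈ Ici (0 : ℝ), Aset L α

/-- The weak* topology on (representatives of) `L∞`, viewed as the dual of `L¹(P)`:
the topology induced by the maps `φ ↦ ∫ φ·u dP` for integrable `u`. -/
def weakStarTop (P : Measure Ω) : TopologicalSpace (Ω → ℝ) :=
  ⨅ (u : Ω → ℝ) (_ : Integrable u P),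
    TopologicalSpace.induced (fun φ : Ω → ℝ => ∫ ω, φ ω * u ω ∂P) inferInstance

/-- The witness set `K := { h ∈ L⁰₊ : P[h>0, g=0]=0 and E_Q[(h/g)·1_{g>0}] ≤ Q[g>0] }`. -/
def Kwitness (P Q : Measure Ω) (g : Ω → ℝ) : Set (Ω → ℝ) :=
  {h | h ∈ L0plus P ∧ P ({ω | 0 < h ω} ∩ {ω | g ω = 0}) = 0 ∧
    (∫⁻ ω in {ω | 0 < g ω}, ENNReal.ofReal (h ω / g ω) ∂Q) ≤ Q {ω | 0 < g ω}}

/-- The set `C` of the example: outcomes `1 − θ₁ + (θ₁ + θ₂)ξ` for `θ` in the constraint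
set `Θ = { θ ∈ ℝ₊² : θ₂ ≤ √θ₁ ≤ 1 }`. -/
def exampleC (ξ : Ω → ℝ) : Set (Ω → ℝ) :=
  {f | ∃ θ : ℝ × ℝ, (0 ≤ θ.1 ∧ 0 ≤ θ.2 ∧ θ.2 ≤ Real.sqrt θ.1 ∧ Real.sqrt θ.1 ≤ 1) ∧
    f = fun ω => 1 - θ.1 + (θ.1 + θ.2) * ξ ω}

/-!
For a non-null set `A`, the indicator `1_A` lies in `L∞₊ ∖ {0}`, hence outside the weak*-closed cone
`J`, and Hahn–Banach gives an `L¹` density `u` with `E[φ u] ≤ 0` on `J` and `E[1_A u] > 0`;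
`u ≥ 0` because `J − L∞₊ ⊆ J`. Such densities are closed under countable sums with summable
weights, so the Halmos–Savage exhaustion produces one that is a.s. strictly positive, and its
normalization is `dQ/dP`.
-/

open scoped ENNReal Topology

section

variable {α : Type*} {mα : MeasurableSpace α}

/-- Halmos–Savage exhaustion: a member of `𝒮` of maximal measure has a null complement. -/
lemma exists_mem_measure_compl_eq_zero (μ : Measure α) [IsFiniteMeasure μ] {𝒮 : Set (Set α)}
    (h_meas : ∀ s ∈ 𝒮, MeasurableSet s) (h_ne : 𝒮.Nonempty)
    (h_union : ∀ s : ℕ → Set α, (∀ n, s n ∈ 𝒮) → ∃ t ∈ 𝒮, (⋃ n, s n) ≤ᵐ[μ] t)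
    (h_meets : ∀ A, MeasurableSet A → μ A ≠ 0 → ∃ s ∈ 𝒮, μ (s ∩ A) ≠ 0) :
    ∃ s ∈ 𝒮, μ sᶜ = 0 := by
  obtain ⟨m, -, hm_lim, hm_mem⟩ := exists_seq_tendsto_sSup (h_ne.image μ) (OrderTop.bddAbove _)
  choose s hs hμs using hm_mem
  obtain ⟨S, hS, hsS⟩ := h_union s hs
  have hS_max : ∀ t ∈ 𝒮, μ t ≤ μ S := by
    refine fun t ht => (le_csSup (OrderTop.bddAbove _) (Set.mem_image_of_mem μ ht)).trans
      (le_of_tendsto' hm_lim fun n => ?_)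
    rw [← hμs n]
    exact measure_mono_ae ((Set.subset_iUnion s n).eventuallyLE.trans hsS)
  refine ⟨S, hS, by_contra fun hSc => ?_⟩
  obtain ⟨t, ht, hμt⟩ := h_meets Sᶜ (h_meas S hS).compl hSc
  obtain ⟨T, hT, hST⟩ := h_union (fun n => if n = 0 then S else t) fun n => by
    split_ifs <;> assumption
  have h_cover : (S ∪ t : Set α) ≤ᵐ[μ] T := by
    refine (LE.le.eventuallyLE (Set.union_subset ?_ ?_)).trans hST
    · exact Set.subset_iUnion_of_subset 0 (by simp)
    · exact Set.subset_iUnion_of_subset 1 (by simp)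
  have h_split : μ (S ∪ t) = μ S + μ (t ∩ Sᶜ) := by
    rw [← Set.union_sdiff_self,
      measure_union disjoint_sdiff_right ((h_meas t ht).diff (h_meas S hS)), Set.sdiff_eq]
  have : μ S + μ (t ∩ Sᶜ) ≤ μ S + 0 := by
    rw [← h_split, add_zero]
    exact (measure_mono_ae h_cover).trans (hS_max T hT)
  exact hμt (le_zero_iff.1 ((ENNReal.add_le_add_iff_left (measure_ne_top μ S)).1 this))

lemma exists_integrable_ae_hasSum_of_summable_integral {μ : Measure α} {v : ℕ → α → ℝ}
    (hvm : ∀ n, Measurable (v n)) (hv0 : ∀ n, 0 ≤ v n) (hvi : ∀ n, Integrable (v n) μ)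
    (hsum : Summable fun n => ∫ a, v n a ∂μ) :
    ∃ w : α → ℝ, Measurable w ∧ 0 ≤ w ∧ Integrable w μ ∧
      ∀ᵐ a ∂μ, HasSum (fun n => v n a) (w a) := by
  have hWm n : Measurable fun a => ENNReal.ofReal (v n a) := (hvm n).ennreal_ofReal
  set W : α → ℝ≥0∞ := fun a => ∑' n, ENNReal.ofReal (v n a)
  have hW_lint : ∫⁻ a, W a ∂μ ≠ ∞ := by
    rw [lintegral_tsum fun n => (hWm n).aemeasurable]
    simp_rw [← ofReal_integral_eq_lintegral_ofReal (hvi _) (ae_of_all _ (hv0 _))]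
    rw [← ENNReal.ofReal_tsum_of_nonneg (fun n => integral_nonneg (hv0 n)) hsum]
    exact ENNReal.ofReal_ne_top
  refine ⟨fun a => (W a).toReal, (Measurable.tsum hWm).ennreal_toReal,
    fun a => ENNReal.toReal_nonneg,
    integrable_toReal_of_lintegral_ne_top (Measurable.tsum hWm).aemeasurable hW_lint, ?_⟩
  filter_upwards [ae_lt_top (Measurable.tsum hWm) hW_lint] with a ha
  have h := ENNReal.hasSum_toReal ha.ne
  rw [← ENNReal.tsum_toReal_eq fun _ => ENNReal.ofReal_ne_top] at h
  simpa only [ENNReal.toReal_ofReal (hv0 _ a)] using h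

end

section PolarDensities

variable {P : Measure Ω} {J : Set (Ω → ℝ)}

lemma integrable_mul_of_mem_Linf {φ u : Ω → ℝ} (hφ : φ ∈ Linf P) (hu : Integrable u P) :
    Integrable (fun ω => φ ω * u ω) P := by
  obtain ⟨hm, C, hC⟩ := hφ
  exact hu.bdd_mul hm.aestronglyMeasurable (hC.mono fun ω h => by simpa using h)

lemma indicator_one_mem_LinfPlus {A : Set Ω} (hA : MeasurableSet A) :
    A.indicator 1 ∈ LinfPlus P := by
  have hm : AEMeasurable (A.indicator (1 : Ω → ℝ)) P := (measurable_one.indicator hA).aemeasurable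
  refine ⟨⟨hm, ae_of_all _ (Set.indicator_nonneg fun _ _ => zero_le_one)⟩, hm, 1,
    ae_of_all _ fun ω => ?_⟩
  by_cases h : ω ∈ A <;> simp [h]

lemma ae_nonneg_of_forall_LinfPlus_integral_mul_nonneg {v : Ω → ℝ} (hv : Integrable v P)
    (h : ∀ g ∈ LinfPlus P, 0 ≤ ∫ ω, g ω * v ω ∂P) : 0 ≤ᵐ[P] v := by
  refine ae_nonneg_of_forall_setIntegral_nonneg hv fun B hB _ => ?_
  have h_ind : ∫ ω, B.indicator 1 ω * v ω ∂P = ∫ ω in B, v ω ∂P := by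
    rw [← integral_indicator hB]
    congr 1 with ω
    by_cases hω : ω ∈ B <;> simp [hω]
  exact h_ind ▸ h _ (indicator_one_mem_LinfPlus hB)

variable (P J) in
/-- Densities of the finite measures `Q ≪ P` with `E_Q[φ] ≤ 0` for all `φ ∈ J`. -/
def polarDensities : Set (Ω → ℝ) :=
  {u | Measurable u ∧ 0 ≤ u ∧ Integrable u P ∧ ∀ φ ∈ J, ∫ ω, φ ω * u ω ∂P ≤ 0}

lemma zero_mem_polarDensities : (0 : Ω → ℝ) ∈ polarDensities P J :=
  ⟨measurable_const, le_rfl, integrable_zero _ _ _, fun _ _ => by simp⟩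

lemma smul_mem_polarDensities {u : Ω → ℝ} (hu : u ∈ polarDensities P J) {c : ℝ} (hc : 0 ≤ c) :
    c • u ∈ polarDensities P J := by
  obtain ⟨hm, hnn, hi, hJ⟩ := hu
  refine ⟨hm.const_smul c, smul_nonneg hc hnn, hi.smul c, fun φ hφ => ?_⟩
  have : ∫ ω, φ ω * (c • u) ω ∂P = c * ∫ ω, φ ω * u ω ∂P := by
    simp_rw [Pi.smul_apply, smul_eq_mul, mul_left_comm (φ _), integral_const_mul]
  rw [this]
  exact mul_nonpos_of_nonneg_of_nonpos hc (hJ φ hφ)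

lemma exists_mem_polarDensities_ae_eq {v : Ω → ℝ} (hvi : Integrable v P) (hv0 : 0 ≤ᵐ[P] v)
    (hvJ : ∀ φ ∈ J, ∫ ω, φ ω * v ω ∂P ≤ 0) : ∃ u ∈ polarDensities P J, v =ᵐ[P] u := by
  set u : Ω → ℝ := fun ω => max (hvi.aemeasurable.mk v ω) 0
  have hvu : v =ᵐ[P] u := by
    filter_upwards [hvi.aemeasurable.ae_eq_mk, hv0] with ω hmk hω
    simp only [u, ← hmk]
    exact (max_eq_left hω).symm
  refine ⟨u, ⟨hvi.aemeasurable.measurable_mk.max measurable_const, fun ω => le_max_right _ _,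
    hvi.congr hvu, fun φ hφ => ?_⟩, hvu⟩
  refine (integral_congr_ae ?_).trans_le (hvJ φ hφ)
  filter_upwards [hvu] with ω hω
  rw [hω]

lemma exists_mem_polarDensities_ae_le_of_summable (hJ : J ⊆ Linf P) {v : ℕ → Ω → ℝ}
    (hv : ∀ n, v n ∈ polarDensities P J) (hsum : Summable fun n => ∫ ω, v n ω ∂P) :
    ∃ w ∈ polarDensities P J, ∀ᵐ ω ∂P, ∀ n, v n ω ≤ w ω := by
  obtain ⟨w, hwm, hw0, hwi, hw_sum⟩ := exists_integrable_ae_hasSum_of_summable_integral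
    (fun n => (hv n).1) (fun n => (hv n).2.1) (fun n => (hv n).2.2.1) hsum
  refine ⟨w, ⟨hwm, hw0, hwi, fun φ hφ => ?_⟩, ?_⟩
  · obtain ⟨-, C, hC⟩ := hJ hφ
    have hF_int n : Integrable (fun ω => φ ω * v n ω) P :=
      integrable_mul_of_mem_Linf (hJ hφ) (hv n).2.2.1
    have hF_le n : ∫ ω, ‖φ ω * v n ω‖ ∂P ≤ C * ∫ ω, v n ω ∂P := by
      rw [← integral_const_mul]
      refine integral_mono_ae (hF_int n).norm ((hv n).2.2.1.const_mul C) ?_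
      filter_upwards [hC] with ω hω
      rw [norm_mul, Real.norm_of_nonneg ((hv n).2.1 ω)]
      exact mul_le_mul_of_nonneg_right ((Real.norm_eq_abs _).trans_le hω) ((hv n).2.1 ω)
    have hF_sum : Summable fun n => ∫ ω, ‖φ ω * v n ω‖ ∂P :=
      (hsum.mul_left C).of_nonneg_of_le (fun n => integral_nonneg fun _ => norm_nonneg _) hF_le
    have : ∫ ω, φ ω * w ω ∂P = ∑' n, ∫ ω, φ ω * v n ω ∂P := by
      rw [integral_tsum_of_summable_integral_norm hF_int hF_sum]
      refine integral_congr_ae ?_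
      filter_upwards [hw_sum] with ω hω
      rw [tsum_mul_left, hω.tsum_eq]
    rw [this]
    exact tsum_nonpos fun n => (hv n).2.2.2 φ hφ
  · filter_upwards [hw_sum] with ω hω n
    exact le_hasSum hω n fun m _ => (hv m).2.1 ω

lemma exists_mem_polarDensities_iUnion_ae_subset (hJ : J ⊆ Linf P) {u : ℕ → Ω → ℝ}
    (hu : ∀ n, u n ∈ polarDensities P J) :
    ∃ w ∈ polarDensities P J, (⋃ n, {ω | 0 < u n ω}) ≤ᵐ[P] {ω | 0 < w ω} := by
  have hb n : 0 ≤ ∫ ω, u n ω ∂P := integral_nonneg (hu n).2.1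
  set c : ℕ → ℝ := fun n => (1 / 2) ^ n / (1 + ∫ ω, u n ω ∂P)
  have hc n : 0 < c n := div_pos (by positivity) (by linarith [hb n])
  have hcb n : ∫ ω, (c n • u n) ω ∂P ≤ (1 / 2) ^ n := by
    have h1 : (∫ ω, u n ω ∂P) / (1 + ∫ ω, u n ω ∂P) ≤ 1 :=
      (div_le_one (by linarith [hb n])).2 (by linarith)
    calc ∫ ω, (c n • u n) ω ∂P = (1 / 2) ^ n * ((∫ ω, u n ω ∂P) / (1 + ∫ ω, u n ω ∂P)) := by
          simp only [Pi.smul_apply, smul_eq_mul, integral_const_mul, c]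
          ring
      _ ≤ (1 / 2) ^ n := mul_le_of_le_one_right (by positivity) h1
  obtain ⟨w, hw, hvw⟩ := exists_mem_polarDensities_ae_le_of_summable hJ
    (fun n => smul_mem_polarDensities (hu n) (hc n).le)
    ((summable_geometric_two.of_nonneg_of_le
      (fun n => integral_nonneg (smul_nonneg (hc n).le (hu n).2.1)) hcb))
  refine ⟨w, hw, ?_⟩
  filter_upwards [hvw] with ω hω hmem
  obtain ⟨n, hn⟩ := Set.mem_iUnion.1 hmem
  exact (mul_pos (hc n) hn).trans_le (hω n)

lemma exists_mem_polarDensities_ae_pos [IsFiniteMeasure P] (hJ : J ⊆ Linf P)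
    (h_meets : ∀ A, MeasurableSet A → P A ≠ 0 →
      ∃ u ∈ polarDensities P J, P ({ω | 0 < u ω} ∩ A) ≠ 0) :
    ∃ w ∈ polarDensities P J, ∀ᵐ ω ∂P, 0 < w ω := by
  obtain ⟨_, ⟨w, hw, rfl⟩, hw_full⟩ := exists_mem_measure_compl_eq_zero P
    (𝒮 := (fun u => {ω | 0 < u ω}) '' polarDensities P J)
    (by rintro _ ⟨u, hu, rfl⟩; exact measurableSet_lt measurable_const hu.1)
    ⟨_, 0, zero_mem_polarDensities, rfl⟩
    (fun s hs => by
      choose u hu hus using hs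
      obtain ⟨w, hw, hsub⟩ := exists_mem_polarDensities_iUnion_ae_subset hJ hu
      exact ⟨_, ⟨w, hw, rfl⟩, by simpa only [← hus] using hsub⟩)
    (fun A hA hPA => by
      obtain ⟨u, hu, hpos⟩ := h_meets A hA hPA
      exact ⟨_, ⟨u, hu, rfl⟩, hpos⟩)
  exact ⟨w, hw, measure_eq_zero_iff_ae_notMem.1 hw_full |>.mono fun _ h => by simpa using h⟩

end PolarDensities

section Separation

lemma exists_finset_forall_abs_sub_lt_of_mem_nhds_iInf {ι X : Type*} (T : ι → X → ℝ) {x : X}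
    {s : Set X} (hs : s ∈ @nhds X (⨅ i, TopologicalSpace.induced (T i) inferInstance) x) :
    ∃ I : Finset ι, ∃ ε > 0, ∀ y, (∀ i ∈ I, |T i y - T i x| < ε) → y ∈ s := by
  rw [nhds_iInf, Filter.mem_iInf'] at hs
  obtain ⟨I, hI, V, hV, -, rfl, -⟩ := hs
  have h_small i : ∀ᶠ ε in 𝓝[>] (0 : ℝ), ∀ y, |T i y - T i x| < ε → y ∈ V i := by
    obtain ⟨t, ht, htV⟩ := Filter.mem_comap.1 (nhds_induced (T i) x ▸ hV i)
    obtain ⟨r, hr, hball⟩ := Metric.mem_nhds_iff.1 ht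
    filter_upwards [Ioc_mem_nhdsGT hr] with ε hε y hy
    exact htV (hball ((Real.dist_eq _ _).trans_lt (hy.trans_le hε.2)))
  obtain ⟨ε, hεV, hε⟩ := (((Filter.eventually_all_finite hI).2 fun i _ => h_small i).and
    self_mem_nhdsWithin).exists
  exact ⟨hI.toFinset, ε, hε, fun y hy => Set.mem_iInter₂.2 fun i hi =>
    hεV i hi y (hy i (hI.mem_toFinset.2 hi))⟩

lemma exists_finset_integrable_of_mem_nhds_weakStarTop {P : Measure Ω} {x : Ω → ℝ}
    {s : Set (Ω → ℝ)} (hs : s ∈ @nhds _ (weakStarTop P) x) :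
    ∃ U : Finset (Ω → ℝ), (∀ u ∈ U, Integrable u P) ∧ ∃ ε > 0, ∀ φ : Ω → ℝ,
      (∀ u ∈ U, |∫ ω, φ ω * u ω ∂P - ∫ ω, x ω * u ω ∂P| < ε) → φ ∈ s := by
  rw [weakStarTop, iInf_subtype'] at hs
  obtain ⟨I, ε, hε, hI⟩ := exists_finset_forall_abs_sub_lt_of_mem_nhds_iInf _ hs
  refine ⟨I.map (Function.Embedding.subtype _), Finset.forall_mem_map.2 fun i _ => i.2, ε, hε,
    fun φ hφ => hI φ fun i hi => hφ i.1 (Finset.mem_map_of_mem _ hi)⟩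

lemma exists_nonpos_on_cone_of_notMem_closure {E : Type*} [AddCommGroup E] [Module ℝ E]
    [TopologicalSpace E] [IsTopologicalAddGroup E] [ContinuousSMul ℝ E] [LocallyConvexSpace ℝ E]
    {C : Set E} {x : E} (hconv : Convex ℝ C) (hcone : ∀ c : ℝ, 0 ≤ c → ∀ y ∈ C, c • y ∈ C)
    (hC : C.Nonempty) (hx : x ∉ closure C) :
    ∃ f : StrongDual ℝ E, (∀ y ∈ C, f y ≤ 0) ∧ 0 < f x := by
  obtain ⟨f, u, hfu, hux⟩ := geometric_hahn_banach_closed_point hconv.closure isClosed_closure hx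
  obtain ⟨y₀, hy₀⟩ := hC
  have hu : 0 < u := by
    simpa using hfu 0 (subset_closure (by simpa using hcone 0 le_rfl y₀ hy₀))
  refine ⟨f, fun y hy => ?_, hu.trans hux⟩
  by_contra! hfy
  have := hfu _ (subset_closure (hcone (u / f y) (div_nonneg hu.le hfy.le) y hy))
  rw [map_smul, smul_eq_mul, div_mul_cancel₀ _ hfy.ne'] at this
  exact lt_irrefl _ this

variable {P : Measure Ω}

lemma integral_add_smul_mul {φ ψ u : Ω → ℝ} (hφ : φ ∈ Linf P) (hψ : ψ ∈ Linf P)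
    (hu : Integrable u P) (a b : ℝ) :
    ∫ ω, (a • φ + b • ψ) ω * u ω ∂P = a * ∫ ω, φ ω * u ω ∂P + b * ∫ ω, ψ ω * u ω ∂P := by
  simp_rw [Pi.add_apply, Pi.smul_apply, smul_eq_mul, add_mul, mul_assoc]
  rw [integral_add ((integrable_mul_of_mem_Linf hφ hu).const_mul a)
    ((integrable_mul_of_mem_Linf hψ hu).const_mul b), integral_const_mul, integral_const_mul]

lemma integral_mul_sum_const_mul {ι : Type*} [Fintype ι] {u : ι → Ω → ℝ}
    (hu : ∀ i, Integrable (u i) P) {φ : Ω → ℝ} (hφ : φ ∈ Linf P) (a : ι → ℝ) :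
    ∫ ω, φ ω * ∑ i, a i * u i ω ∂P = ∑ i, a i * ∫ ω, φ ω * u i ω ∂P := by
  simp_rw [Finset.mul_sum, mul_left_comm (φ _)]
  rw [integral_finsetSum _ fun i _ => (integrable_mul_of_mem_Linf hφ (hu i)).const_mul _]
  simp_rw [integral_const_mul]

/-- A weak* neighbourhood only constrains finitely many integrals `∫ φ u`, so separation reduces to
Hahn–Banach in `ℝ^U`. -/
lemma exists_integrable_separating_of_notMem_closure {J : Set (Ω → ℝ)} (hJ : J ⊆ Linf P)
    (hconv : Convex ℝ J) (hcone : ∀ c : ℝ, 0 ≤ c → ∀ φ ∈ J, c • φ ∈ J) (hne : J.Nonempty)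
    {x : Ω → ℝ} (hx : x ∈ Linf P) (hxJ : x ∉ @closure _ (weakStarTop P) J) :
    ∃ v : Ω → ℝ, Integrable v P ∧ (∀ φ ∈ J, ∫ ω, φ ω * v ω ∂P ≤ 0) ∧
      0 < ∫ ω, x ω * v ω ∂P := by
  classical
  have h_nhds : Jᶜ ∈ @nhds _ (weakStarTop P) x := by
    let := weakStarTop P
    rwa [← mem_interior_iff_mem_nhds, interior_compl]
  obtain ⟨U, hU, ε, hε, hUε⟩ := exists_finset_integrable_of_mem_nhds_weakStarTop h_nhds
  let S : (Ω → ℝ) → (U → ℝ) := fun φ u => ∫ ω, φ ω * u.1 ω ∂P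
  have hS_conv : Convex ℝ (S '' J) := by
    rintro _ ⟨φ, hφ, rfl⟩ _ ⟨ψ, hψ, rfl⟩ a b ha hb hab
    refine ⟨a • φ + b • ψ, hconv hφ hψ ha hb hab, funext fun u => ?_⟩
    exact integral_add_smul_mul (hJ hφ) (hJ hψ) (hU u.1 u.2) a b
  have hS_cone : ∀ c : ℝ, 0 ≤ c → ∀ z ∈ S '' J, c • z ∈ S '' J := by
    rintro c hc _ ⟨φ, hφ, rfl⟩
    refine ⟨c • φ, hcone c hc φ hφ, funext fun u => ?_⟩
    simp only [S, Pi.smul_apply, smul_eq_mul, mul_assoc, integral_const_mul]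
  have hSx : S x ∉ closure (S '' J) := by
    intro h
    obtain ⟨_, ⟨φ, hφ, rfl⟩, hdist⟩ := Metric.mem_closure_iff.1 h ε hε
    refine hUε φ (fun u hu => ?_) hφ
    rw [← Real.dist_eq, dist_comm]
    exact (dist_pi_lt_iff hε).1 hdist ⟨u, hu⟩
  obtain ⟨f, hfJ, hfx⟩ :=
    exists_nonpos_on_cone_of_notMem_closure hS_conv hS_cone (hne.image S) hSx
  set a : U → ℝ := fun u => f fun v => if u = v then 1 else 0
  have hf_eq : ∀ φ ∈ Linf P, f (S φ) = ∫ ω, φ ω * ∑ u : U, a u * u.1 ω ∂P := fun φ hφ => by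
    rw [integral_mul_sum_const_mul (u := fun u : U => u.1) (fun u => hU u.1 u.2) hφ, ← f.coe_coe,
      LinearMap.pi_apply_eq_sum_univ]
    simp_rw [smul_eq_mul, mul_comm]
    rfl
  refine ⟨fun ω => ∑ u : U, a u * u.1 ω,
    integrable_finsetSum _ fun u _ => (hU u.1 u.2).const_mul _, fun φ hφ => ?_, ?_⟩
  · exact hf_eq φ (hJ hφ) ▸ hfJ _ ⟨φ, hφ, rfl⟩
  · exact hf_eq x hx ▸ hfx

end Separation

section KrepsYan

variable {P : Measure Ω} {J : Set (Ω → ℝ)}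

lemma exists_mem_polarDensities_measure_inter_ne_zero (hJ : J ⊆ Linf P) (hconv : Convex ℝ J)
    (hcone : ∀ c : ℝ, 0 ≤ c → ∀ φ ∈ J, c • φ ∈ J)
    (hclosed : (@closure _ (weakStarTop P) J) ∩ Linf P ⊆ J)
    (hsub : ∀ φ ∈ J, ∀ h ∈ LinfPlus P, φ - h ∈ J)
    (hpos : ∀ φ ∈ J, φ ∈ LinfPlus P → φ =ᵐ[P] (fun _ => (0 : ℝ))) (hJ0 : (0 : Ω → ℝ) ∈ J)
    {A : Set Ω} (hA : MeasurableSet A) (hPA : P A ≠ 0) :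
    ∃ u ∈ polarDensities P J, P ({ω | 0 < u ω} ∩ A) ≠ 0 := by
  have hx : A.indicator 1 ∈ LinfPlus P := indicator_one_mem_LinfPlus hA
  have hxJ : A.indicator 1 ∉ @closure _ (weakStarTop P) J := fun h => by
    refine hPA (measure_mono_null (fun ω hω => ?_) (ae_iff.1 (hpos _ (hclosed ⟨h, hx.2⟩) hx)))
    simp [hω]
  obtain ⟨v, hvi, hvJ, hvA⟩ :=
    exists_integrable_separating_of_notMem_closure hJ hconv hcone ⟨0, hJ0⟩ hx.2 hxJ
  have hv0 : 0 ≤ᵐ[P] v := by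
    refine ae_nonneg_of_forall_LinfPlus_integral_mul_nonneg hvi fun g hg => ?_
    have := hvJ _ (hsub 0 hJ0 g hg)
    simp only [Pi.sub_apply, Pi.zero_apply, zero_sub, neg_mul, integral_neg] at this
    linarith
  obtain ⟨u, hu, hvu⟩ := exists_mem_polarDensities_ae_eq hvi hv0 hvJ
  refine ⟨u, hu, fun hnull => hvA.ne' (integral_eq_zero_of_ae ?_)⟩
  filter_upwards [hvu, measure_eq_zero_iff_ae_notMem.1 hnull] with ω hω hnot
  by_cases hωA : ω ∈ A
  · have : u ω = 0 := le_antisymm (not_lt.1 fun h => hnot ⟨h, hωA⟩) (hu.2.1 ω)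
    simp [hω, this]
  · simp [hωA]

lemma exists_equivProb_integral_eq_inv_mul [NeZero P] {w : Ω → ℝ} (hwm : Measurable w)
    (hw0 : 0 ≤ w) (hwi : Integrable w P) (hwpos : ∀ᵐ ω ∂P, 0 < w ω) :
    ∃ Q : Measure Ω, EquivProb P Q ∧
      ∀ φ : Ω → ℝ, ∫ ω, φ ω ∂Q = (∫ ω, w ω ∂P)⁻¹ * ∫ ω, φ ω * w ω ∂P := by
  set c := ∫ ω, w ω ∂P
  have hc : 0 < c := by
    refine (integral_pos_iff_support_of_nonneg hw0 hwi).2 (pos_iff_ne_zero.2 fun h => ?_)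
    have := ae_neBot.2 (NeZero.ne P)
    obtain ⟨ω, hω, hω0⟩ := (hwpos.and (measure_eq_zero_iff_ae_notMem.1 h)).exists
    exact hω0 hω.ne'
  have hd : Measurable fun ω => ENNReal.ofReal (c⁻¹ * w ω) :=
    (hwm.const_mul _).ennreal_ofReal
  have hd0 ω : 0 ≤ c⁻¹ * w ω := mul_nonneg (inv_nonneg.2 hc.le) (hw0 ω)
  refine ⟨P.withDensity fun ω => ENNReal.ofReal (c⁻¹ * w ω), ⟨⟨?_⟩,
    withDensity_absolutelyContinuous _ _, withDensity_absolutelyContinuous' hd.aemeasurable ?_⟩,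
    fun φ => ?_⟩
  · rw [withDensity_apply _ MeasurableSet.univ, Measure.restrict_univ,
      ← ofReal_integral_eq_lintegral_ofReal (hwi.const_mul _) (ae_of_all _ hd0),
      integral_const_mul, inv_mul_cancel₀ hc.ne', ENNReal.ofReal_one]
  · filter_upwards [hwpos] with ω hω
    exact (ENNReal.ofReal_pos.2 (mul_pos (inv_pos.2 hc) hω)).ne'
  · rw [integral_withDensity_eq_integral_toReal_smul hd
      (ae_of_all _ fun _ => ENNReal.ofReal_lt_top), ← integral_const_mul]
    simp_rw [ENNReal.toReal_ofReal (hd0 _), smul_eq_mul]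
    congr 1 with ω
    ring

end KrepsYan

/-- Kreps–Yan: a weak*-closed convex cone `J ⊆ L∞` with `J = J − L∞₊` and
`J ∩ L∞₊ = {0}` is separated from `L∞₊` by an equivalent probability: there exists
`Q ∼ P` with `E_Q[φ] ≤ 0` for all `φ ∈ J`. -/
theorem krepsYan_separation
    (P : Measure Ω) [IsProbabilityMeasure P]
    (J : Set (Ω → ℝ)) (hJ : J ⊆ Linf P) (hconv : Convex ℝ J)
    (hcone : ∀ c : ℝ, 0 ≤ c → ∀ φ ∈ J, c • φ ∈ J)
    (hclosed : (@closure _ (weakStarTop P) J) ∩ Linf P ⊆ J)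
    (hsub : ∀ φ ∈ J, ∀ h ∈ LinfPlus P, φ - h ∈ J)
    (hpos : ∀ φ ∈ J, φ ∈ LinfPlus P → φ =ᵐ[P] (fun _ => (0 : ℝ))) :
    ∃ Q : Measure Ω, EquivProb P Q ∧ ∀ φ ∈ J, (∫ ω, φ ω ∂Q) ≤ 0 := by
  rcases J.eq_empty_or_nonempty with rfl | ⟨φ₀, hφ₀⟩
  · exact ⟨P, ⟨inferInstance, .rfl, .rfl⟩, by simp⟩
  have hJ0 : (0 : Ω → ℝ) ∈ J := by simpa using hcone 0 le_rfl φ₀ hφ₀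
  obtain ⟨w, ⟨hwm, hw0, hwi, hwJ⟩, hwpos⟩ := exists_mem_polarDensities_ae_pos hJ fun A hA hPA =>
    exists_mem_polarDensities_measure_inter_ne_zero hJ hconv hcone hclosed hsub hpos hJ0 hA hPA
  obtain ⟨Q, hPQ, hQ⟩ := exists_equivProb_integral_eq_inv_mul hwm hw0 hwi hwpos
  refine ⟨Q, hPQ, fun φ hφ => ?_⟩
  rw [hQ]
  exact mul_nonpos_of_nonneg_of_nonpos (inv_nonneg.2 (integral_nonneg hw0)) (hwJ φ hφ)

end
end

section
/- Let (Ω,F,P) support a random variable ξ ∈ L⁰₊ with P[ξ > 0] = 1 and P[ξ ≤ ε] > 0 and P[1/ξ ≤ ε] > 0 for every ε > 0. Let Θ := { (θ₁,θ₂) ∈ ℝ₊² : θ₂ ≤ √θ₁ ≤ 1 } and C := { 1 − θ₁ + (θ₁ + θ₂)ξ : (θ₁,θ₂) ∈ Θ } ⊆ L⁰₊. Then the set of maximal elements of C is C^max = { 1 − γ + (γ + √γ)ξ : γ ∈ [0,1] }. -/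
open MeasureTheory Filter Set

noncomputable section

variable {Ω : Type*} [MeasurableSpace Ω]

/-- Auxiliary: a.e. positivity from `P {0 < ξ} = 1`. -/
lemma ae_pos_of_prob_one (P : Measure Ω) [IsProbabilityMeasure P]
    (ξ : Ω → ℝ) (hmeas : Measurable ξ) (hpos : P {ω | 0 < ξ ω} = 1) :
    ∀ᵐ ω ∂P, 0 < ξ ω := by
  have hms : MeasurableSet {ω | 0 < ξ ω} := measurableSet_lt measurable_const hmeas
  have h := measure_compl hms (measure_ne_top P _)
  rw [hpos, measure_univ, tsub_self] at h
  rw [ae_iff]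
  exact h

/-- Auxiliary: find a point in a positive-measure set satisfying an a.e. property. -/
lemma exists_point_of_pos_measure (P : Measure Ω) (S : Set Ω) (hS : 0 < P S)
    (p : Ω → Prop) (hp : ∀ᵐ ω ∂P, p ω) : ∃ ω ∈ S, p ω := by
  have hN : P {ω | ¬ p ω} = 0 := hp
  have hsub : S ⊆ (S ∩ {ω | p ω}) ∪ {ω | ¬ p ω} := by
    intro ω hω
    by_cases h : p ω
    · exact Or.inl ⟨hω, h⟩
    · exact Or.inr h
  have hle : P S ≤ P (S ∩ {ω | p ω}) + P {ω | ¬ p ω} :=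
    le_trans (measure_mono hsub) (measure_union_le _ _)
  rw [hN, add_zero] at hle
  have : P (S ∩ {ω | p ω}) ≠ 0 := fun h0 => by
    rw [h0] at hle; exact absurd (lt_of_lt_of_le hS hle) (lt_irrefl 0)
  obtain ⟨ω, hω⟩ := nonempty_of_measure_ne_zero this
  exact ⟨ω, hω.1, hω.2⟩

/-- Auxiliary: if `a + b·ξ ≤ 0` a.e., then `a ≤ 0` and `b ≤ 0`. -/
lemma coef_nonpos (P : Measure Ω) [IsProbabilityMeasure P]
    (ξ : Ω → ℝ) (hmeas : Measurable ξ)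
    (hpos : P {ω | 0 < ξ ω} = 1)
    (hsmall : ∀ ε : ℝ, 0 < ε → 0 < P {ω | ξ ω ≤ ε})
    (hlarge : ∀ ε : ℝ, 0 < ε → 0 < P {ω | 1 / ξ ω ≤ ε})
    (a b : ℝ) (h : ∀ᵐ ω ∂P, a + b * ξ ω ≤ 0) : a ≤ 0 ∧ b ≤ 0 := by
  have hae : ∀ᵐ ω ∂P, 0 < ξ ω := ae_pos_of_prob_one P ξ hmeas hpos
  have hc : ∀ᵐ ω ∂P, 0 < ξ ω ∧ a + b * ξ ω ≤ 0 := hae.and h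
  constructor
  · -- use small values of ξ
    have key : ∀ ε : ℝ, 0 < ε → a ≤ |b| * ε := by
      intro ε hε
      obtain ⟨ω, hωS, hω1, hω2⟩ :=
        exists_point_of_pos_measure P _ (hsmall ε hε) _ hc
      have hωε : ξ ω ≤ ε := hωS
      rcases abs_cases b with ⟨hb, _⟩ | ⟨hb, _⟩ <;> nlinarith
    by_contra ha
    push_neg at ha
    have hd : (0:ℝ) < 2 * (|b| + 1) := by positivity
    have hε : 0 < a / (2 * (|b| + 1)) := by positivity
    have h2 := key _ hε
    rw [← mul_div_assoc, le_div_iff₀ hd] at h2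
    nlinarith [abs_nonneg b, mul_nonneg (abs_nonneg b) ha.le]
  · -- use large values of ξ
    have key : ∀ ε : ℝ, 0 < ε → b ≤ |a| * ε := by
      intro ε hε
      obtain ⟨ω, hωS, hω1, hω2⟩ :=
        exists_point_of_pos_measure P _ (hlarge ε hε) _ hc
      have hωε : 1 / ξ ω ≤ ε := hωS
      have hx : 1 ≤ ε * ξ ω := by
        rw [div_le_iff₀ hω1] at hωε; linarith
      have hna : -a ≤ |a| := neg_le_abs a
      nlinarith [abs_nonneg a]
    by_contra hb
    push_neg at hb
    have hd : (0:ℝ) < 2 * (|a| + 1) := by positivity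
    have hε : 0 < b / (2 * (|a| + 1)) := by positivity
    have h2 := key _ hε
    rw [← mul_div_assoc, le_div_iff₀ hd] at h2
    nlinarith [abs_nonneg a, mul_nonneg (abs_nonneg a) hb.le]

/-- in the example, the maximal elements of
`C = { 1 − θ₁ + (θ₁+θ₂)ξ : θ ∈ Θ }` are exactly `{ 1 − γ + (γ+√γ)ξ : γ ∈ [0,1] }`. -/
theorem exampleC_maximal_elements
    (P : Measure Ω) [IsProbabilityMeasure P]
    (ξ : Ω → ℝ) (hmeas : Measurable ξ) (hnn : 0 ≤ᵐ[P] ξ)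
    (hpos : P {ω | 0 < ξ ω} = 1)
    (hsmall : ∀ ε : ℝ, 0 < ε → 0 < P {ω | ξ ω ≤ ε})
    (hlarge : ∀ ε : ℝ, 0 < ε → 0 < P {ω | 1 / ξ ω ≤ ε}) :
    {f | f ∈ exampleC ξ ∧ ∀ h ∈ exampleC ξ, f ≤ᵐ[P] h → f =ᵐ[P] h} =
      {f | ∃ γ ∈ Icc (0 : ℝ) 1, f = fun ω => 1 - γ + (γ + Real.sqrt γ) * ξ ω} := by
  have hae : ∀ᵐ ω ∂P, 0 < ξ ω := ae_pos_of_prob_one P ξ hmeas hpos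
  ext f
  simp only [mem_setOf_eq]
  constructor
  · rintro ⟨⟨θ, ⟨h1, h2, h3, h4⟩, rfl⟩, hmax⟩
    refine ⟨θ.1, ⟨h1, ?_⟩, ?_⟩
    · nlinarith [Real.sq_sqrt h1, Real.sqrt_nonneg θ.1]
    · -- maximality forces θ.2 = √θ.1
      have hmem : (fun ω => 1 - θ.1 + (θ.1 + Real.sqrt θ.1) * ξ ω) ∈ exampleC ξ :=
        ⟨(θ.1, Real.sqrt θ.1), ⟨h1, Real.sqrt_nonneg _, le_refl _, h4⟩, rfl⟩
      have hle : (fun ω => 1 - θ.1 + (θ.1 + θ.2) * ξ ω)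
          ≤ᵐ[P] fun ω => 1 - θ.1 + (θ.1 + Real.sqrt θ.1) * ξ ω := by
        filter_upwards [hnn] with ω hω
        have hω' : (0:ℝ) ≤ ξ ω := hω
        nlinarith [mul_le_mul_of_nonneg_right h3 hω']
      have heq := hmax _ hmem hle
      -- get a point where ξ > 0 and equality holds
      obtain ⟨ω, -, hω1, hω2⟩ :=
        exists_point_of_pos_measure P univ (by simp) _ (hae.and heq)
      have h5 : (θ.2 - Real.sqrt θ.1) * ξ ω = 0 := by
        linear_combination hω2
      have hθ2 : θ.2 = Real.sqrt θ.1 := by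
        rcases mul_eq_zero.mp h5 with h | h
        · linarith
        · exfalso; linarith
      rw [hθ2]
  · rintro ⟨γ, ⟨hγ0, hγ1⟩, rfl⟩
    have hsγ : Real.sqrt γ ≤ 1 := Real.sqrt_le_one.mpr hγ1
    refine ⟨⟨(γ, Real.sqrt γ), ⟨hγ0, Real.sqrt_nonneg _, le_refl _, hsγ⟩, rfl⟩, ?_⟩
    rintro h ⟨η, ⟨e1, e2, e3, e4⟩, rfl⟩ hle
    have hab : (∀ᵐ ω ∂P, (η.1 - γ) + (γ + Real.sqrt γ - η.1 - η.2) * ξ ω ≤ 0) := by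
      filter_upwards [hle] with ω hω
      linarith
    obtain ⟨ha, hb⟩ := coef_nonpos P ξ hmeas hpos hsmall hlarge _ _ hab
    have hsle : Real.sqrt η.1 ≤ Real.sqrt γ := Real.sqrt_le_sqrt (by linarith)
    have hη1 : η.1 = γ := by linarith
    have hη2 : η.2 = Real.sqrt γ := by
      rw [hη1] at hb e3
      linarith
    filter_upwards with ω
    rw [hη1, hη2]

end
end
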